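/- Let λ > 0 and let (b*, z*, B*) be an optimal solution to the SDP: minimize (1/2)⟨XᵀX, B⟩ − yᵀXb + (1/2)yᵀy + λ∑ᵢzᵢ subject to B ⪰ bbᵀ and [[zᵢ, bᵢ],[bᵢ, Bᵢᵢ]] ⪰ 0 for all i. Then for all i, zᵢ* ∈ [0,1], and zᵢ* = (bᵢ*)²/Bᵢᵢ* if Bᵢᵢ* ≠ 0 and zᵢ* = 0 otherwise. -/

import Mathlib

/-!
The variable `z` enters the objective only through `λ ∑ᵢ zᵢ` and the constraints only through
the `2 × 2` blocks, which say exactly `Bᵢᵢ ≥ 0` and `zᵢ Bᵢᵢ ≥ bᵢ²`. Lowering every `zᵢ` to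
`bᵢ² / Bᵢᵢ` therefore stays feasible and decreases the objective by `λ ∑ᵢ (zᵢ - bᵢ² / Bᵢᵢ)`,
so optimality with `λ > 0` forces `zᵢ = bᵢ² / Bᵢᵢ`. Finally `B ⪰ bbᵀ` gives `bᵢ² ≤ Bᵢᵢ`,
hence `zᵢ ≤ 1`.
-/

open Matrix Finset

/-- Feasibility in the SDP relaxation. -/
def SDPfeas {p : ℕ} (b z : Fin p → ℝ) (B : Matrix (Fin p) (Fin p) ℝ) : Prop :=
  (B - Matrix.vecMulVec b b).PosSemidef ∧
    ∀ i, (!![z i, b i; b i, B i i] : Matrix (Fin 2) (Fin 2) ℝ).PosSemidef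

/-- Objective of the SDP relaxation. -/
noncomputable def sdpObj {n p : ℕ} (X : Matrix (Fin n) (Fin p) ℝ) (y : Fin n → ℝ)
    (lam : ℝ) (b z : Fin p → ℝ) (B : Matrix (Fin p) (Fin p) ℝ) : ℝ :=
  (1/2) * ∑ i, ∑ j, (Xᵀ * X) i j * B i j - y ⬝ᵥ X.mulVec b
    + (1/2) * (y ⬝ᵥ y) + lam * ∑ i, z i

lemma dotProduct_mulVec_fin_two (z b B : ℝ) (x : Fin 2 → ℝ) :
    star x ⬝ᵥ (!![z, b; b, B] *ᵥ x) = z * x 0 ^ 2 + 2 * b * x 0 * x 1 + B * x 1 ^ 2 := by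
  simp [dotProduct, mulVec, Fin.sum_univ_two]
  ring

lemma posSemidef_fin_two_iff (z b B : ℝ) :
    (!![z, b; b, B] : Matrix (Fin 2) (Fin 2) ℝ).PosSemidef ↔
      0 ≤ z ∧ 0 ≤ B ∧ b ^ 2 ≤ z * B := by
  constructor
  · intro h
    have hdet := h.det_nonneg
    rw [det_fin_two_of] at hdet
    exact ⟨by simpa using h.diag_nonneg (i := 0), by simpa using h.diag_nonneg (i := 1),
      by nlinarith⟩
  · rintro ⟨hz, hB, hb⟩
    refine .of_dotProduct_mulVec_nonneg ?_ fun x => ?_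
    · ext i j
      fin_cases i <;> fin_cases j <;> rfl
    rw [dotProduct_mulVec_fin_two]
    rcases hz.eq_or_lt with rfl | hz
    · obtain rfl : b = 0 := by nlinarith
      nlinarith [sq_nonneg (x 1)]
    -- `z • (quadratic form) = (z x₀ + b x₁)² + (z B - b²) x₁²`
    · nlinarith [sq_nonneg (z * x 0 + b * x 1), sq_nonneg (x 1)]

lemma sq_le_diag_of_posSemidef_sub_vecMulVec {n : Type*} [Fintype n] {b : n → ℝ}
    {B : Matrix n n ℝ} (h : (B - vecMulVec b b).PosSemidef) (i : n) : b i ^ 2 ≤ B i i := by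
  have := h.diag_nonneg (i := i)
  rw [Matrix.sub_apply, vecMulVec_apply] at this
  nlinarith

lemma sdpObj_sub_sdpObj {n p : ℕ} (X : Matrix (Fin n) (Fin p) ℝ) (y : Fin n → ℝ) (lam : ℝ)
    (b z z' : Fin p → ℝ) (B : Matrix (Fin p) (Fin p) ℝ) :
    sdpObj X y lam b z B - sdpObj X y lam b z' B = lam * ∑ i, (z i - z' i) := by
  simp only [sdpObj, sum_sub_distrib]
  ring

namespace SDPfeas

variable {p : ℕ} {b z : Fin p → ℝ} {B : Matrix (Fin p) (Fin p) ℝ}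

lemma diag_nonneg (h : SDPfeas b z B) (i : Fin p) : 0 ≤ B i i :=
  ((posSemidef_fin_two_iff _ _ _).mp (h.2 i)).2.1

lemma sq_div_diag_le (h : SDPfeas b z B) (i : Fin p) : b i ^ 2 / B i i ≤ z i := by
  obtain ⟨hz, hB, hb⟩ := (posSemidef_fin_two_iff _ _ _).mp (h.2 i)
  exact div_le_of_le_mul₀ hB hz hb

lemma sq_div_diag (h : SDPfeas b z B) : SDPfeas b (fun i => b i ^ 2 / B i i) B := by
  refine ⟨h.1, fun i => (posSemidef_fin_two_iff _ _ _).mpr ⟨?_, h.diag_nonneg i, ?_⟩⟩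
  · exact div_nonneg (sq_nonneg _) (h.diag_nonneg i)
  rcases (h.diag_nonneg i).eq_or_lt with hB | hB
  · obtain ⟨-, -, hb⟩ := (posSemidef_fin_two_iff _ _ _).mp (h.2 i)
    rw [← hB, mul_zero] at hb ⊢
    exact hb
  · rw [div_mul_cancel₀ _ hB.ne']

end SDPfeas

/-- at an optimal SDP solution, each `zᵢ* ∈ [0,1]` and
`zᵢ* = (bᵢ*)²/Bᵢᵢ*` if `Bᵢᵢ* ≠ 0`, `zᵢ* = 0` otherwise. -/
theorem stmt10 (n p : ℕ) (X : Matrix (Fin n) (Fin p) ℝ) (y : Fin n → ℝ)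
    (lam : ℝ) (hlam : 0 < lam)
    (b z : Fin p → ℝ) (B : Matrix (Fin p) (Fin p) ℝ)
    (hfeas : SDPfeas b z B)
    (hopt : ∀ (b' z' : Fin p → ℝ) (B' : Matrix (Fin p) (Fin p) ℝ),
      SDPfeas b' z' B' → sdpObj X y lam b z B ≤ sdpObj X y lam b' z' B') :
    ∀ i, z i ∈ Set.Icc (0:ℝ) 1 ∧
      z i = if B i i ≠ 0 then (b i)^2 / B i i else 0 := by
  have hsum_le : ∑ i, z i ≤ ∑ i, b i ^ 2 / B i i := by
    have hgap := sdpObj_sub_sdpObj X y lam b z (fun i => b i ^ 2 / B i i) B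
    rw [sum_sub_distrib] at hgap
    nlinarith [hopt b _ B hfeas.sq_div_diag]
  have hz : ∀ i, z i = b i ^ 2 / B i i := fun i =>
    ((sum_eq_sum_iff_of_le fun i _ => hfeas.sq_div_diag_le i).mp
      ((sum_le_sum fun i _ => hfeas.sq_div_diag_le i).antisymm hsum_le) i (mem_univ i)).symm
  intro i
  -- `x / 0 = 0`, so the case split in the statement is just `b i ^ 2 / B i i`.
  have hite : (if B i i ≠ 0 then b i ^ 2 / B i i else 0) = b i ^ 2 / B i i := by
    split_ifs with h
    · rfl
    · rw [not_not.mp h, div_zero]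
  rw [hite, hz i]
  exact ⟨⟨div_nonneg (sq_nonneg _) (hfeas.diag_nonneg i),
    div_le_one_of_le₀ (sq_le_diag_of_posSemidef_sub_vecMulVec hfeas.1 i) (hfeas.diag_nonneg i)⟩,
    rfl⟩
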